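/- Let n ≥ 2 and γ ∈ (0,1). There exist constants τ̂ > 0 and K ≥ 2/γ, depending only on γ and n, such that for every simplex S ⊂ ℝⁿ with affinely independent vertices x₁,…,x_{n+1} and relative width w(S) > γ, setting x₀ = (1/(n+1))·Σᵢ xᵢ and ρ = K·diam(S), one has the inclusion B_{ρ(1+τ̂)}(x₀) ⊆ ∪_{i=1}^{n+1} B_ρ(xᵢ). -/

import Mathlib

/-! Let x₀ be the centroid and y a point with ‖y - x₀‖ < ρ(1 + τ̂). In the direction u of
y - x₀ the vertex maximising ⟪xᵢ, u⟫ lies at least width/(n+1) > γ·diam/(n+1) beyond x₀,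
because ⟪x₀, u⟫ is the average of the ⟪xᵢ, u⟫, one of which is their minimum.
Expanding ‖y - xᵢ‖² around x₀ then gives ‖y - xᵢ‖ < ρ for K = 2(n+1)/γ and τ̂ = 1/K². -/

open MeasureTheory Metric Set
open scoped RealInnerProductSpace

noncomputable section

/-- The width of the simplex with vertices `x i`: the minimum over unit directions `v` of
`maxᵢ ⟪xᵢ, v⟫ - minᵢ ⟪xᵢ, v⟫`. -/
def simplexWidth {n : ℕ} (x : Fin (n + 1) → EuclideanSpace ℝ (Fin n)) : ℝ :=
  sInf ((fun v => (Finset.univ.sup' Finset.univ_nonempty fun i => ⟪x i, v⟫)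
      - Finset.univ.inf' Finset.univ_nonempty fun i => ⟪x i, v⟫) ''
    sphere (0 : EuclideanSpace ℝ (Fin n)) 1)

theorem Finset.sup'_sub_inf'_le_card_mul_sup'_sub_sum {ι : Type*} [Fintype ι] [Nonempty ι]
    (f : ι → ℝ) :
    univ.sup' univ_nonempty f - univ.inf' univ_nonempty f
      ≤ Fintype.card ι * univ.sup' univ_nonempty f - ∑ i, f i := by
  obtain ⟨j, -, hj⟩ := univ.exists_mem_eq_inf' univ_nonempty f
  have hsum : Fintype.card ι * univ.sup' univ_nonempty f - ∑ i, f i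
      = ∑ i, (univ.sup' univ_nonempty f - f i) := by
    simp [Finset.sum_sub_distrib]
  rw [hsum, hj]
  exact single_le_sum (fun i _ => sub_nonneg.2 (le_sup' f (mem_univ i))) (mem_univ j)

theorem sq_sub_four_div_mul_mul_add_sq_lt_sq {K d r : ℝ} (hK : 1 < K) (hr : 0 ≤ r)
    (hrK : r < K * d * (1 + 1 / K ^ 2)) :
    r ^ 2 - 4 / K * d * r + d ^ 2 < (K * d) ^ 2 := by
  have hK0 : 0 < K := by linarith
  have hd : 0 < d := by
    by_contra! hd
    nlinarith [mul_nonpos_of_nonneg_of_nonpos hK0.le hd, one_div_pos.2 (pow_pos hK0 2)]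
  have hd2 : d ^ 2 < (K * d) ^ 2 := by
    rw [mul_pow]; exact lt_mul_of_one_lt_left (pow_pos hd 2) (one_lt_pow₀ hK two_ne_zero)
  set R := K * d * (1 + 1 / K ^ 2)
  rcases le_total r (4 / K * d) with hsmall | hlarge
  · nlinarith [mul_nonneg hr (sub_nonneg.2 hsmall)]
  · -- beyond 4d/K the left side increases with r, so it is below its value at r = R
    have hR : R ^ 2 - 4 / K * d * R + d ^ 2 < (K * d) ^ 2 := by
      have : R ^ 2 - 4 / K * d * R + d ^ 2 = (K * d) ^ 2 - d ^ 2 - 3 * (d / K) ^ 2 := by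
        simp only [R]; field_simp; ring
      rw [this]; nlinarith [sq_nonneg (d / K)]
    nlinarith [mul_nonneg (sub_nonneg.2 hrK.le) (sub_nonneg.2 hlarge)]

theorem simplexWidth_le_sup'_sub_inf' {n : ℕ} (x : Fin (n + 1) → EuclideanSpace ℝ (Fin n))
    {u : EuclideanSpace ℝ (Fin n)} (hu : u ∈ sphere 0 1) :
    simplexWidth x ≤ (Finset.univ.sup' Finset.univ_nonempty fun i => ⟪x i, u⟫)
      - Finset.univ.inf' Finset.univ_nonempty fun i => ⟪x i, u⟫ := by
  refine csInf_le ⟨0, ?_⟩ ⟨u, hu, rfl⟩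
  rintro - ⟨v, -, rfl⟩
  exact sub_nonneg.2 ((Finset.inf'_le _ (Finset.mem_univ 0)).trans
    (Finset.le_sup' (fun i => ⟪x i, v⟫) (Finset.mem_univ 0)))

theorem exists_simplexWidth_div_le_inner_sub_centroid {n : ℕ}
    (x : Fin (n + 1) → EuclideanSpace ℝ (Fin n)) {u : EuclideanSpace ℝ (Fin n)}
    (hu : u ∈ sphere 0 1) :
    ∃ i, simplexWidth x / (n + 1) ≤ ⟪x i - (n + 1 : ℝ)⁻¹ • ∑ j, x j, u⟫ := by
  set f : Fin (n + 1) → ℝ := fun i => ⟪x i, u⟫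
  obtain ⟨i, -, hi⟩ := Finset.univ.exists_mem_eq_sup' Finset.univ_nonempty f
  refine ⟨i, ?_⟩
  have hwidth := (simplexWidth_le_sup'_sub_inf' x hu).trans
    (Finset.sup'_sub_inf'_le_card_mul_sup'_sub_sum f)
  rw [hi, Fintype.card_fin] at hwidth
  rw [div_le_iff₀' (by positivity), inner_sub_left, real_inner_smul_left, sum_inner]
  push_cast at hwidth
  field_simp
  linarith

theorem exists_simplexWidth_div_mul_norm_le_inner_sub_centroid {n : ℕ}
    (x : Fin (n + 1) → EuclideanSpace ℝ (Fin n)) (v : EuclideanSpace ℝ (Fin n)) :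
    ∃ i, simplexWidth x / (n + 1) * ‖v‖ ≤ ⟪x i - (n + 1 : ℝ)⁻¹ • ∑ j, x j, v⟫ := by
  rcases eq_or_ne v 0 with rfl | hv
  · exact ⟨0, by simp⟩
  have hv' : 0 < ‖v‖ := norm_pos_iff.2 hv
  obtain ⟨i, hi⟩ := exists_simplexWidth_div_le_inner_sub_centroid x
    (u := ‖v‖⁻¹ • v) (by simp [norm_smul, hv'.ne'])
  exact ⟨i, by rwa [real_inner_smul_right, ← div_eq_inv_mul, le_div_iff₀ hv'] at hi⟩

theorem dist_centroid_le_diam_convexHull {E : Type*} [NormedAddCommGroup E] [NormedSpace ℝ E]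
    {n : ℕ} (x : Fin (n + 1) → E) (i : Fin (n + 1)) :
    dist (x i) ((n + 1 : ℝ)⁻¹ • ∑ j, x j) ≤ diam (convexHull ℝ (range x)) := by
  have hx : ∀ j, x j ∈ convexHull ℝ (range x) := fun j => subset_convexHull ℝ _ (mem_range_self j)
  have hcentroid : (n + 1 : ℝ)⁻¹ • ∑ j, x j ∈ convexHull ℝ (range x) := by
    rw [Finset.smul_sum]
    refine (convex_convexHull ℝ _).sum_mem (fun _ _ => by positivity) ?_ (fun j _ => hx j)
    simp only [Finset.sum_const, Finset.card_univ, Fintype.card_fin, nsmul_eq_mul]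
    push_cast
    field_simp
  exact dist_le_diam_of_mem (isBounded_convexHull.2 (finite_range x).isBounded) (hx i) hcentroid

theorem ball_subset_iUnion_ball_of_forall_exists_le_inner {E ι : Type*}
    [NormedAddCommGroup E] [InnerProductSpace ℝ E] (x : ι → E) (c : E) {K d : ℝ} (hK : 1 < K)
    (hdist : ∀ i, dist (x i) c ≤ d) (hdir : ∀ v, ∃ i, 2 / K * d * ‖v‖ ≤ ⟪x i - c, v⟫) :
    ball c (K * d * (1 + 1 / K ^ 2)) ⊆ ⋃ i, ball (x i) (K * d) := by
  intro y hy
  obtain ⟨i, hi⟩ := hdir (y - c)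
  have hd : 0 ≤ d := dist_nonneg.trans (hdist i)
  refine mem_iUnion.2 ⟨i, mem_ball.2 ?_⟩
  rw [mem_ball, dist_eq_norm] at hy
  simp only [dist_eq_norm] at hdist ⊢
  have hexpand : ‖y - x i‖ ^ 2 = ‖y - c‖ ^ 2 - 2 * ⟪x i - c, y - c⟫ + ‖x i - c‖ ^ 2 := by
    rw [show y - x i = (y - c) - (x i - c) by abel, norm_sub_sq_real, real_inner_comm]
  refine lt_of_pow_lt_pow_left₀ 2 (by positivity) ?_
  calc ‖y - x i‖ ^ 2 ≤ ‖y - c‖ ^ 2 - 4 / K * d * ‖y - c‖ + d ^ 2 := by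
        have h4 : 4 / K * d * ‖y - c‖ = 2 * (2 / K * d * ‖y - c‖) := by ring
        linarith [pow_le_pow_left₀ (norm_nonneg _) (hdist i) 2]
    _ < (K * d) ^ 2 := sq_sub_four_div_mul_mul_add_sq_lt_sq hK (norm_nonneg _) hy

theorem stmt_10_general (n : ℕ) (γ : ℝ) (hγ : γ ∈ Set.Ioo (0 : ℝ) 1) :
    ∃ τhat : ℝ, 0 < τhat ∧ ∃ K : ℝ, 2 / γ ≤ K ∧
      ∀ x : Fin (n + 1) → EuclideanSpace ℝ (Fin n), AffineIndependent ℝ x →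
        γ < simplexWidth x / diam (convexHull ℝ (Set.range x)) →
        ball ((n + 1 : ℝ)⁻¹ • ∑ i, x i)
            (K * diam (convexHull ℝ (Set.range x)) * (1 + τhat))
          ⊆ ⋃ i : Fin (n + 1), ball (x i) (K * diam (convexHull ℝ (Set.range x))) := by
  obtain ⟨hγ0, hγ1⟩ := hγ
  set K := 2 * (n + 1) / γ with hK
  have hK1 : 1 < K := by rw [hK, lt_div_iff₀ hγ0]; linarith
  refine ⟨1 / K ^ 2, by positivity, K, ?_, fun x _ hwidth => ?_⟩
  · exact div_le_div_of_nonneg_right (by linarith) hγ0.le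
  have hd : 0 < diam (convexHull ℝ (range x)) :=
    diam_nonneg.lt_of_ne fun h => by rw [← h, div_zero] at hwidth; linarith
  set d := diam (convexHull ℝ (range x))
  have hγd : γ * d < simplexWidth x := (lt_div_iff₀ hd).1 hwidth
  refine ball_subset_iUnion_ball_of_forall_exists_le_inner x _ hK1
    (dist_centroid_le_diam_convexHull x) fun v => ?_
  obtain ⟨i, hi⟩ := exists_simplexWidth_div_mul_norm_le_inner_sub_centroid x v
  refine ⟨i, le_trans (mul_le_mul_of_nonneg_right ?_ (norm_nonneg v)) hi⟩
  rw [hK, show 2 / (2 * (n + 1) / γ) * d = γ * d / (n + 1) by field_simp]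
  exact div_le_div_of_nonneg_right hγd.le (by positivity)

theorem stmt_10 (n : ℕ) (hn : 2 ≤ n) (γ : ℝ) (hγ : γ ∈ Set.Ioo (0 : ℝ) 1) :
    ∃ τhat : ℝ, 0 < τhat ∧ ∃ K : ℝ, 2 / γ ≤ K ∧
      ∀ x : Fin (n + 1) → EuclideanSpace ℝ (Fin n), AffineIndependent ℝ x →
        γ < simplexWidth x / diam (convexHull ℝ (Set.range x)) →
        ball ((n + 1 : ℝ)⁻¹ • ∑ i, x i)
            (K * diam (convexHull ℝ (Set.range x)) * (1 + τhat))
          ⊆ ⋃ i : Fin (n + 1), ball (x i) (K * diam (convexHull ℝ (Set.range x))) :=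
  stmt_10_general n γ hγ
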